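/- arXiv:1512.08494 — 2 statements merged into one kernel-verified Lean document; each statement's English description precedes it below -/
import Mathlib

section
/- Let n ≥ 5 and let 𝒫 = (P,w) be an essential internal-nonzero-weighted tree with leaf set [n]. For distinct leaves i, j, l, m, the Buneman index ⟨i,j | l,m⟩ holds if and only if at least one of the following holds: (a) there exists r ∈ [n]−{i,j,l,m} such that D_{i,j,l}(𝒫) + D_{m,r,l}(𝒫) ≠ D_{i,r,l}(𝒫) + D_{m,j,l}(𝒫) and the analogous inequalities obtained from this one by swapping i with j and/or l with m also hold; (b) for every r ∈ [n]−{i,j,l,m}, both D_{i,j,r}(𝒫) + D_{m,l,r}(𝒫) ≠ D_{i,m,r}(𝒫) + D_{j,l,r}(𝒫) and D_{i,j,r}(𝒫) + D_{m,l,r}(𝒫) ≠ D_{i,l,r}(𝒫) + D_{j,m,r}(𝒫) hold. -/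
/-- A weighted finite tree with leaf set labelled by `Fin n`:
a finite vertex type `V`, a tree `G` on `V`, an injective labelling `leaf` of the
degree-one vertices by `Fin n` (every vertex of degree one is a labelled leaf),
and a weight function `w` on edges (zero off the edge set). -/
structure WTree (n : ℕ) where
  V : Type
  fintypeV : Fintype V
  G : SimpleGraph V
  isTree : G.IsTree
  leaf : Fin n → V
  leafInj : Function.Injective leaf
  leafSpec : ∀ v : V, (G.neighborSet v).ncard = 1 ↔ v ∈ Set.range leaf
  w : Sym2 V → ℝ
  wSupport : ∀ e, e ∉ G.edgeSet → w e = 0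

namespace WTree

variable {n : ℕ}

/-- The degree of a vertex. -/
noncomputable def deg (T : WTree n) (v : T.V) : ℕ := (T.G.neighborSet v).ncard

/-- A node is a vertex of degree `> 2`. -/
def IsNode (T : WTree n) (v : T.V) : Prop := 2 < T.deg v

/-- A tree is essential if it has no vertices of degree `2`. -/
def Essential (T : WTree n) : Prop := ∀ v : T.V, T.deg v ≠ 2

/-- The set of edges lying on the path between two vertices. -/
def pathEdges (T : WTree n) (u v : T.V) : Set (Sym2 T.V) :=
  {e | ∃ p : T.G.Walk u v, p.IsPath ∧ e ∈ p.edges}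

/-- The edge set of the minimal subtree containing the leaves in `S`. -/
def subtreeEdges (T : WTree n) (S : Set (Fin n)) : Set (Sym2 T.V) :=
  {e | ∃ i ∈ S, ∃ j ∈ S, e ∈ T.pathEdges (T.leaf i) (T.leaf j)}

/-- `D_I(T)`: the weight of the minimal subtree of `T` containing the leaves in `I`. -/
noncomputable def D (T : WTree n) (I : Finset (Fin n)) : ℝ :=
  ∑ᶠ e ∈ T.subtreeEdges ↑I, T.w e

/-- The total weight of the tree. -/
noncomputable def Dtot (T : WTree n) : ℝ := ∑ᶠ e ∈ T.G.edgeSet, T.w e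

/-- An edge is a twig edge if it lies on the path from some leaf to the nearest node. -/
def IsTwigEdge (T : WTree n) (e : Sym2 T.V) : Prop :=
  ∃ (i : Fin n) (v : T.V), T.IsNode v ∧
    ∃ p : T.G.Walk (T.leaf i) v, p.IsPath ∧
      (∀ u ∈ p.support, T.IsNode u → u = v) ∧ e ∈ p.edges

/-- Internal-nonzero-weighted: every internal (non-twig) edge has nonzero weight. -/
def InternalNonzero (T : WTree n) : Prop :=
  ∀ e ∈ T.G.edgeSet, ¬ T.IsTwigEdge e → T.w e ≠ 0

/-- Positive-weighted: all edge weights are positive. -/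
def PositiveWeighted (T : WTree n) : Prop := ∀ e ∈ T.G.edgeSet, 0 < T.w e

/-- The leaves lying on the side of vertex `a` after removing the edge `e`. -/
def sideLeaves (T : WTree n) (e : Sym2 T.V) (a : T.V) : Set (Fin n) :=
  {i | e ∉ T.pathEdges (T.leaf i) a}

/-- A pseudostar of kind `(n, k)`: every edge divides the leaf set into two parts,
at least one of which has cardinality `≥ k`. -/
def IsPseudostar (T : WTree n) (k : ℕ) : Prop :=
  ∀ a b : T.V, T.G.Adj a b →
    k ≤ (T.sideLeaves s(a, b) a).ncard ∨ k ≤ (T.sideLeaves s(a, b) b).ncard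

/-- `T` realizes the family `D₀` of `k`-weights. -/
def Realizes (T : WTree n) (k : ℕ) (D₀ : Finset (Fin n) → ℝ) : Prop :=
  ∀ I : Finset (Fin n), I.card = k → T.D I = D₀ I

/-- Two leaves are neighbours if the path between them contains exactly one node. -/
def Neighbours (T : WTree n) (i j : Fin n) : Prop :=
  i ≠ j ∧ ∃ p : T.G.Walk (T.leaf i) (T.leaf j), p.IsPath ∧
    ∃! v : T.V, v ∈ p.support ∧ T.IsNode v

/-- The Buneman index `⟨i,j | l,m⟩` holds iff the paths `i–j` and `l–m` are disjoint,
equivalently in `T|_{i,j,l,m}` the leaves `i,j` are neighbours, `l,m` are neighbours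
and `i,l` are not neighbours. -/
def Buneman (T : WTree n) (i j l m : Fin n) : Prop :=
  ∀ (p : T.G.Walk (T.leaf i) (T.leaf j)) (q : T.G.Walk (T.leaf l) (T.leaf m)),
    p.IsPath → q.IsPath → ∀ v : T.V, v ∈ p.support → v ∉ q.support

/-- The minimal subtree spanned by the four leaves `i,j,l,m` is a star (i.e. all
pairwise paths share a common vertex). -/
def StarQuartet (T : WTree n) (i j l m : Fin n) : Prop :=
  ∃ c : T.V, ∀ x ∈ ({i, j, l, m} : Set (Fin n)), ∀ y ∈ ({i, j, l, m} : Set (Fin n)),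
    x ≠ y → ∀ p : T.G.Walk (T.leaf x) (T.leaf y), p.IsPath → c ∈ p.support

/-- A cherry: a set of leaves pairwise neighbours. -/
def IsCherry (T : WTree n) (C : Set (Fin n)) : Prop :=
  ∀ i ∈ C, ∀ j ∈ C, i ≠ j → T.Neighbours i j

/-- A complete cherry: a cherry not strictly contained in another cherry. -/
def IsCompleteCherry (T : WTree n) (C : Set (Fin n)) : Prop :=
  T.IsCherry C ∧ ¬ ∃ C' : Set (Fin n), T.IsCherry C' ∧ C ⊂ C'

/-- A star is a tree with only one node. -/
def IsStar (T : WTree n) : Prop := ∃! v : T.V, T.IsNode v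

/-- `x` is the median of the three leaves `a,b,c`: it lies on all three pairwise paths. -/
def IsMedian (T : WTree n) (a b c : Fin n) (x : T.V) : Prop :=
  (∀ p : T.G.Walk (T.leaf a) (T.leaf b), p.IsPath → x ∈ p.support) ∧
  (∀ p : T.G.Walk (T.leaf a) (T.leaf c), p.IsPath → x ∈ p.support) ∧
  (∀ p : T.G.Walk (T.leaf b) (T.leaf c), p.IsPath → x ∈ p.support)

/-- The weight of the twig associated to the leaf `i` (the path from the leaf to the
nearest node). -/
noncomputable def twigWeight (T : WTree n) (i : Fin n) : ℝ :=
  ∑ᶠ e ∈ {e : Sym2 T.V | ∃ v : T.V, T.IsNode v ∧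
      ∃ p : T.G.Walk (T.leaf i) v, p.IsPath ∧
        (∀ u ∈ p.support, T.IsNode u → u = v) ∧ e ∈ p.edges}, T.w e

/-- Two weighted trees with leaf set `Fin n` are equal (isomorphic respecting the
leaf labels and the weights). -/
def Isom (T T' : WTree n) : Prop :=
  ∃ φ : T.V ≃ T'.V,
    (∀ a b : T.V, T.G.Adj a b ↔ T'.G.Adj (φ a) (φ b)) ∧
    (∀ i : Fin n, φ (T.leaf i) = T'.leaf i) ∧
    (∀ a b : T.V, T.w s(a, b) = T'.w s(φ a, φ b))

/-- `T'` is obtained from `T` by the `k`-IO operation on the edge `{a, b}`: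
the edge divides the leaf set into two parts each of cardinality `< k`; it is
contracted (via the quotient map `φ`) and `w{a,b}/k` is added to the weight of
every twig (i.e. to every pendant edge). -/
def IOStepOn (k : ℕ) (T T' : WTree n) (a b : T.V) : Prop :=
  T.G.Adj a b ∧
  (T.sideLeaves s(a, b) a).ncard < k ∧ (T.sideLeaves s(a, b) b).ncard < k ∧
  ∃ φ : T.V → T'.V,
    Function.Surjective φ ∧ φ a = φ b ∧
    (∀ x y : T.V, φ x = φ y → x = y ∨ s(x, y) = s(a, b)) ∧
    (∀ i : Fin n, φ (T.leaf i) = T'.leaf i) ∧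
    (∀ u v : T'.V, T'.G.Adj u v ↔
      ∃ x y : T.V, φ x = u ∧ φ y = v ∧ T.G.Adj x y ∧ s(x, y) ≠ s(a, b)) ∧
    (∀ x y : T.V, T.G.Adj x y → s(x, y) ≠ s(a, b) →
      ((∃ i : Fin n, T.leaf i = x ∨ T.leaf i = y) →
        T'.w s(φ x, φ y) = T.w s(x, y) + T.w s(a, b) / k) ∧
      (¬ (∃ i : Fin n, T.leaf i = x ∨ T.leaf i = y) →
        T'.w s(φ x, φ y) = T.w s(x, y)))

/-- `T'` is obtained from `T` by a `k`-IO operation. -/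
def IOStep (k : ℕ) (T T' : WTree n) : Prop := ∃ a b : T.V, IOStepOn k T T' a b

/-- `T'` is obtained from `T` by a `k`-OI operation (the inverse of a `k`-IO operation). -/
def OIStep (k : ℕ) (T T' : WTree n) : Prop := IOStep k T' T

/-- `T'` is obtained from `T` by inserting an internal edge of weight `0`
(the inverse of contracting it). -/
def InsertZeroStep (T T' : WTree n) : Prop :=
  ∃ a b : T'.V, T'.G.Adj a b ∧ ¬ T'.IsTwigEdge s(a, b) ∧ T'.w s(a, b) = 0 ∧
    ∃ φ : T'.V → T.V,
      Function.Surjective φ ∧ φ a = φ b ∧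
      (∀ x y : T'.V, φ x = φ y → x = y ∨ s(x, y) = s(a, b)) ∧
      (∀ i : Fin n, φ (T'.leaf i) = T.leaf i) ∧
      (∀ u v : T.V, T.G.Adj u v ↔
        ∃ x y : T'.V, φ x = u ∧ φ y = v ∧ T'.G.Adj x y ∧ s(x, y) ≠ s(a, b)) ∧
      (∀ x y : T'.V, T'.G.Adj x y → s(x, y) ≠ s(a, b) → T.w s(φ x, φ y) = T'.w s(x, y))

/-- Replace the weight function of `T`. -/
def reweight (T : WTree n) (w' : Sym2 T.V → ℝ)
    (h : ∀ e, e ∉ T.G.edgeSet → w' e = 0) : WTree n :=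
  { T with w := w', wSupport := h }

end WTree

/-!
Write `d(a, b)` for the weight of the path between `a` and `b`. Every edge of the subtree spanned
by three leaves lies on exactly two of the three paths between them, so
`2 D_{a,b,c} = d(a,b) + d(a,c) + d(b,c)` and each inequality of the statement says that some
`d(a,b) + d(c,d) - d(a,d) - d(b,c)` is nonzero. Sorting the edges by the split of `{a,b,c,d}`
into two pairs that they induce, this quantity equals `2 w(ad|bc) - 2 w(ab|cd)`, where
`w(ab|cd)` is the weight of the edges separating `{a,b}` from `{c,d}`. Edges inducing `ab|cd`
exist iff the paths `a b` and `c d` are disjoint, i.e. in the Buneman case, and two different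
splits are never both induced. Hence (b) gives the Buneman index at once, and (a) gives it for
`i j` against `l r` and `m r`, so also against `l m`.

Conversely, under the Buneman index both `d(i,j) + d(l,m) - d(i,l) - d(j,m)` and
`d(i,j) + d(l,m) - d(i,m) - d(j,l)` are `-2` times the weight of the bridge between the paths
`i j` and `l m`, so (b) holds unless that weight is zero. In that case the first edge `s(x, c)` of the bridge is internal, hence of nonzero weight,
so `c` is not the end of the bridge; as the tree is essential, `c` has a third neighbour, beyond
which lies a leaf `r`, and `s(x, c)` is the only edge separating `{i,j}` from `{l,r}` or from
`{m,r}`. This gives (a).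
-/

open SimpleGraph

theorem Finset.ne_and_ne_of_card_eq_four {α : Type*} [DecidableEq α] {i j l m : α}
    (h : ({i, j, l, m} : Finset α).card = 4) : i ≠ j ∧ l ≠ m := by
  constructor <;> rintro rfl
  · have := Finset.card_le_three (a := i) (b := l) (c := m)
    simp_all
  · have := Finset.card_le_three (a := i) (b := j) (c := l)
    simp_all

namespace SimpleGraph

variable {V : Type*} {G : SimpleGraph V}

theorem two_lt_ncard_neighborSet [Finite V] {c x y z : V}
    (hx : G.Adj c x) (hy : G.Adj c y) (hz : G.Adj c z)
    (hxy : x ≠ y) (hxz : x ≠ z) (hyz : y ≠ z) : 2 < (G.neighborSet c).ncard := by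
  have h3 : ({x, y, z} : Set V).ncard = 3 :=
    Set.ncard_eq_three.mpr ⟨x, y, z, hxy, hxz, hyz, rfl⟩
  have := Set.ncard_le_ncard (s := {x, y, z}) (t := G.neighborSet c) (by
    rintro v (rfl | rfl | rfl) <;> assumption)
  omega

theorem one_lt_ncard_neighborSet [Finite V] {c x y : V}
    (hx : G.Adj c x) (hy : G.Adj c y) (hxy : x ≠ y) : 1 < (G.neighborSet c).ncard := by
  have := Set.ncard_le_ncard (s := {x, y}) (t := G.neighborSet c) (by
    rintro v (rfl | rfl) <;> assumption)
  rw [Set.ncard_pair hxy] at this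
  omega

theorem exists_adj_ne_ne [Finite V] {c x y : V}
    (h : 2 < (G.neighborSet c).ncard) : ∃ z, G.Adj c z ∧ z ≠ x ∧ z ≠ y := by
  by_contra! hc
  have := Set.ncard_le_ncard (s := G.neighborSet c) (t := {x, y}) fun z hz => by
    by_cases hzx : z = x
    · exact Or.inl hzx
    · exact Or.inr (hc z hz hzx)
  have := Set.ncard_insert_le x {y}
  rw [Set.ncard_singleton] at this
  omega

theorem Walk.not_disjoint_support_of_mem_edges {a b c d : V}
    {p : G.Walk a b} {q : G.Walk c d} {e : Sym2 V} (hp : e ∈ p.edges) (hq : e ∈ q.edges) :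
    ¬ p.support.Disjoint q.support := by
  induction e using Sym2.ind with
  | h u v =>
    exact fun h => h (p.fst_mem_support_of_mem_edges hp) (q.fst_mem_support_of_mem_edges hq)

theorem Walk.notMem_edges_of_forall_mem_support_eq {a b c d w : V}
    {p : G.Walk a b} {q : G.Walk c d} {e : Sym2 V} (hp : e ∈ p.edges)
    (h : ∀ z ∈ p.support, z ∈ q.support → z = w) : e ∉ q.edges := by
  induction e using Sym2.ind with
  | h u v =>
    intro hq
    exact (p.adj_of_mem_edges hp).ne ((h u (p.fst_mem_support_of_mem_edges hp)
      (q.fst_mem_support_of_mem_edges hq)).trans (h v (p.snd_mem_support_of_mem_edges hp)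
      (q.snd_mem_support_of_mem_edges hq)).symm)

namespace IsTree

variable (hG : G.IsTree)

noncomputable def path (a b : V) : G.Walk a b := (hG.existsUnique_path a b).choose

theorem isPath_path (a b : V) : (hG.path a b).IsPath :=
  (hG.existsUnique_path a b).choose_spec.1

theorem path_eq {a b : V} {p : G.Walk a b} (hp : p.IsPath) : hG.path a b = p :=
  ((hG.existsUnique_path a b).choose_spec.2 p hp).symm

theorem path_self (a : V) : hG.path a a = .nil := hG.path_eq .nil

theorem path_of_adj {a b : V} (h : G.Adj a b) : hG.path a b = .cons h .nil :=
  hG.path_eq (by simp [h.ne])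

theorem reverse_path (a b : V) : (hG.path a b).reverse = hG.path b a :=
  (hG.path_eq (hG.isPath_path a b).reverse).symm

variable {hG}

theorem mem_edges_path_comm {a b : V} {e : Sym2 V} :
    e ∈ (hG.path b a).edges ↔ e ∈ (hG.path a b).edges := by
  rw [← hG.reverse_path, Walk.edges_reverse, List.mem_reverse]

theorem mem_support_path_comm {a b v : V} :
    v ∈ (hG.path b a).support ↔ v ∈ (hG.path a b).support := by
  rw [← hG.reverse_path, Walk.support_reverse, List.mem_reverse]

theorem notMem_edges_path_self {a : V} {e : Sym2 V} : e ∉ (hG.path a a).edges := by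
  simp [hG.path_self]

theorem ne_of_mem_edges_path {a b : V} {e : Sym2 V} (he : e ∈ (hG.path a b).edges) : a ≠ b := by
  rintro rfl
  exact notMem_edges_path_self he

theorem path_append {a b x : V} (hx : x ∈ (hG.path a b).support) :
    (hG.path a x).append (hG.path x b) = hG.path a b := by
  classical
  rw [hG.path_eq ((hG.isPath_path a b).takeUntil hx),
    hG.path_eq ((hG.isPath_path a b).dropUntil hx), Walk.take_spec]

theorem mem_edges_path_of_mem_support {a b x : V} (hx : x ∈ (hG.path a b).support)
    {e : Sym2 V} (he : e ∈ (hG.path x a).edges ∨ e ∈ (hG.path x b).edges) :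
    e ∈ (hG.path a b).edges := by
  rw [← path_append hx, Walk.edges_append, List.mem_append, mem_edges_path_comm]
  exact he

theorem mem_support_path_of_mem_support {a b x : V} (hx : x ∈ (hG.path a b).support)
    {v : V} (hv : v ∈ (hG.path x a).support ∨ v ∈ (hG.path x b).support) :
    v ∈ (hG.path a b).support := by
  rw [← path_append hx, Walk.mem_support_append_iff, mem_support_path_comm]
  exact hv

theorem mem_edges_path_or (x : V) {a b : V} {e : Sym2 V} (he : e ∈ (hG.path a b).edges) :
    e ∈ (hG.path a x).edges ∨ e ∈ (hG.path x b).edges := by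
  classical
  let q := (hG.path a x).append (hG.path x b)
  rw [hG.path_eq q.bypass_isPath] at he
  simpa [q, Walk.edges_append] using q.edges_bypass_subset_edges he

theorem mem_support_path_or (x : V) {a b v : V} (hv : v ∈ (hG.path a b).support) :
    v ∈ (hG.path a x).support ∨ v ∈ (hG.path x b).support := by
  classical
  let q := (hG.path a x).append (hG.path x b)
  rw [hG.path_eq q.bypass_isPath] at hv
  simpa [q, Walk.mem_support_append_iff] using q.support_bypass_subset_support hv

theorem length_path_of_mem_edges {x u v : V} (h : s(u, v) ∈ (hG.path x u).edges) :
    (hG.path x u).length = (hG.path x v).length + 1 := by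
  rw [← path_append ((hG.path x u).snd_mem_support_of_mem_edges h), Walk.length_append,
    hG.path_of_adj ((hG.path x u).adj_of_mem_edges h).symm, Walk.length_cons, Walk.length_nil]

theorem mem_edges_path_iff_notMem {u v y : V} (h : G.Adj u v) :
    s(u, v) ∈ (hG.path y u).edges ↔ s(u, v) ∉ (hG.path y v).edges := by
  refine ⟨fun hu hv => ?_, fun hv => ?_⟩
  · have := length_path_of_mem_edges hu
    have := length_path_of_mem_edges (Sym2.eq_swap ▸ hv)
    omega
  · have huv : s(u, v) ∈ (hG.path u v).edges := by simp [hG.path_of_adj h]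
    exact (mem_edges_path_or y huv).resolve_right hv |> mem_edges_path_comm.mp

theorem mem_edges_path_iff_of_adj {u v a b : V} (h : G.Adj u v) :
    s(u, v) ∈ (hG.path a b).edges ↔
      ¬(s(u, v) ∈ (hG.path a u).edges ↔ s(u, v) ∈ (hG.path b u).edges) := by
  have ha := mem_edges_path_iff_notMem (hG := hG) (y := a) h
  have hb := mem_edges_path_iff_notMem (hG := hG) (y := b) h
  constructor
  · intro he hab
    have hu := mem_edges_path_or u he
    have hv := mem_edges_path_or v he
    rw [mem_edges_path_comm (a := b) (b := u)] at hu
    rw [mem_edges_path_comm (a := b) (b := v)] at hv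
    tauto
  · intro hab
    by_cases hau : s(u, v) ∈ (hG.path a u).edges
    · exact ((mem_edges_path_or b hau).resolve_right (by tauto))
    · have hbu : s(u, v) ∈ (hG.path b u).edges := by tauto
      exact mem_edges_path_comm.mp ((mem_edges_path_or a hbu).resolve_right hau)

/-- An edge lies on an even number of the three sides of any triangle. -/
theorem mem_edges_path_iff (x : V) {a b : V} {e : Sym2 V} :
    e ∈ (hG.path a b).edges ↔ ¬(e ∈ (hG.path x a).edges ↔ e ∈ (hG.path x b).edges) := by
  by_cases he : e ∈ G.edgeSet
  · induction e using Sym2.ind with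
    | h u v =>
      rw [mem_edges_path_iff_of_adj he, mem_edges_path_iff_of_adj (a := x) (b := a) he,
        mem_edges_path_iff_of_adj (a := x) (b := b) he]
      tauto
  · have : ∀ {c d : V}, e ∉ (hG.path c d).edges := fun h => he (Walk.edges_subset_edgeSet _ h)
    simp [this]

theorem adj_snd_path {c a : V} (h : a ≠ c) : G.Adj c (hG.path c a).snd :=
  Walk.adj_snd (Walk.not_nil_of_ne h.symm)

theorem mk_snd_mem_edges_path {c a : V} (h : a ≠ c) :
    s(c, (hG.path c a).snd) ∈ (hG.path c a).edges :=
  Walk.mk_start_snd_mem_edges (Walk.not_nil_of_ne h.symm)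

theorem eq_snd_of_mem_edges_path {c a x : V} (h : s(c, x) ∈ (hG.path c a).edges) :
    x = (hG.path c a).snd :=
  hG.isAcyclic.eq_snd_of_adj_start (hG.isPath_path c a) ((hG.path c a).adj_of_mem_edges h)
    ((hG.path c a).snd_mem_support_of_mem_edges h)

theorem snd_path_of_adj {c x : V} (h : G.Adj c x) : (hG.path c x).snd = x := by
  simp [hG.path_of_adj h]

theorem notMem_support_path_of_mem_edges {a b c : V} {e : Sym2 V}
    (ha : e ∈ (hG.path c a).edges) (hb : e ∈ (hG.path c b).edges) :
    c ∉ (hG.path a b).support := fun hc =>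
  (mem_edges_path_iff c).mp (mem_edges_path_of_mem_support hc (Or.inl ha)) (iff_of_true ha hb)

theorem mem_support_path_iff_snd_ne {a b c : V} (ha : a ≠ c) (hb : b ≠ c) :
    c ∈ (hG.path a b).support ↔ (hG.path c a).snd ≠ (hG.path c b).snd := by
  have hea := mk_snd_mem_edges_path (hG := hG) ha
  refine ⟨fun hc heq => notMem_support_path_of_mem_edges hea
    (heq ▸ mk_snd_mem_edges_path hb) hc, fun hne => ?_⟩
  have heb : s(c, (hG.path c a).snd) ∉ (hG.path c b).edges := fun h =>
    hne (eq_snd_of_mem_edges_path h)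
  exact (hG.path a b).fst_mem_support_of_mem_edges
    ((mem_edges_path_iff c).mpr fun h => heb (h.mp hea))

/-- A shortest path between the two sets will do. -/
theorem exists_path_meeting_only_at_ends (S T : Finset V) (hS : S.Nonempty) (hT : T.Nonempty) :
    ∃ x ∈ S, ∃ y ∈ T, ∀ z ∈ (hG.path x y).support,
      (z ∈ S → z = x) ∧ (z ∈ T → z = y) := by
  obtain ⟨⟨x, y⟩, hxy, hmin⟩ :=
    (S ×ˢ T).exists_min_image (fun p => (hG.path p.1 p.2).length) (hS.product hT)
  rw [Finset.mem_product] at hxy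
  refine ⟨x, hxy.1, y, hxy.2, fun z hz => ⟨fun hzS => ?_, fun hzT => ?_⟩⟩ <;>
    have hlen := congrArg Walk.length (path_append hz) <;> rw [Walk.length_append] at hlen
  · have := hmin (z, y) (Finset.mem_product.2 ⟨hzS, hxy.2⟩)
    exact (Walk.eq_of_length_eq_zero (p := hG.path x z) (by simp only at this; omega)).symm
  · have := hmin (x, z) (Finset.mem_product.2 ⟨hxy.1, hzT⟩)
    exact Walk.eq_of_length_eq_zero (p := hG.path z y) (by simp only at this; omega)

theorem exists_mem_support_path_three (a b c : V) :
    ∃ m, m ∈ (hG.path a b).support ∧ m ∈ (hG.path a c).support ∧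
      m ∈ (hG.path b c).support := by
  classical
  obtain ⟨m, hm, c', hc', hmin⟩ := exists_path_meeting_only_at_ends (hG := hG)
    (hG.path a b).support.toFinset {c} ⟨a, by simp⟩ ⟨c, by simp⟩
  rw [Finset.mem_singleton] at hc'
  subst hc'
  rw [List.mem_toFinset] at hm
  have key : ∀ d, (hG.path m d).support ⊆ (hG.path a b).support →
      m ∈ (hG.path d c').support := by
    intro d hd
    by_cases hdm : d = m
    · exact hdm ▸ Walk.start_mem_support _
    by_cases hcm : c' = m
    · exact hcm ▸ Walk.end_mem_support _
    refine (mem_support_path_iff_snd_ne hdm hcm).mpr fun h => (adj_snd_path (hG := hG) hcm).ne ?_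
    have hs : (hG.path m c').snd ∈ (hG.path m d).support := by
      rw [← h]
      exact Walk.getVert_mem_support _ 1
    exact ((hmin _ (Walk.getVert_mem_support _ 1)).1 (List.mem_toFinset.mpr (hd hs))).symm
  exact ⟨m, hm, key a fun v hv => mem_support_path_of_mem_support hm (Or.inl hv),
    key b fun v hv => mem_support_path_of_mem_support hm (Or.inr hv)⟩

/-- Take `t` as far from `c` as possible among the vertices reached from `c` through `z`. -/
theorem exists_ncard_neighborSet_eq_one_snd_path_eq [Finite V] {c z : V} (h : G.Adj c z) :
    ∃ t, (G.neighborSet t).ncard = 1 ∧ (hG.path c t).snd = z := by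
  classical
  have := Fintype.ofFinite V
  obtain ⟨t, ht, hmax⟩ := (Finset.univ.filter fun t => (hG.path c t).snd = z).exists_max_image
    (fun t => (hG.path c t).length) ⟨z, by simp [snd_path_of_adj h]⟩
  rw [Finset.mem_filter] at ht
  have htc : t ≠ c := by
    rintro rfl
    simp [hG.path_self, h.ne] at ht
  have hnil := Walk.not_nil_of_ne (p := hG.path c t) htc.symm
  refine ⟨t, Set.ncard_eq_one.mpr ⟨(hG.path c t).penultimate, ?_⟩, ht.2⟩
  ext t'
  simp only [mem_neighborSet, Set.mem_singleton_iff]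
  refine ⟨fun ht' => ?_, fun ht' => ht' ▸ (Walk.adj_penultimate hnil).symm⟩
  by_contra hne
  have hsupp : t' ∉ (hG.path c t).support := fun hs =>
    hne (hG.isAcyclic.eq_penultimate_of_adj_end (hG.isPath_path c t) ht' hs)
  have hpath := hG.path_eq ((hG.isPath_path c t).concat hsupp ht')
  have := hmax t' (Finset.mem_filter.mpr ⟨Finset.mem_univ _, ?_⟩)
  · rw [hpath, Walk.length_concat] at this
    omega
  · refine (eq_snd_of_mem_edges_path ?_).symm
    rw [hpath, Walk.edges_concat, List.concat_eq_append]
    exact List.mem_append_left _ (ht.2 ▸ mk_snd_mem_edges_path htc)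

/-- Otherwise the median of `t`, `u`, `v` would be a vertex of degree at least three on the path
from `t` to `v` other than `v`. -/
theorem mem_support_path_of_ncard_le_two [Finite V] {t u v : V}
    (ht : (G.neighborSet t).ncard = 1) (hu : (G.neighborSet u).ncard = 1) (htu : t ≠ u)
    (hv : ∀ y ∈ (hG.path t v).support, 2 < (G.neighborSet y).ncard → y = v) :
    v ∈ (hG.path t u).support := by
  obtain ⟨m, htu', htv, huv⟩ := hG.exists_mem_support_path_three t u v
  by_cases hmv : m = v
  · exact hmv ▸ htu'
  have hvm : v ≠ m := Ne.symm hmv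
  have htm : t ≠ m := by
    rintro rfl
    have := one_lt_ncard_neighborSet (adj_snd_path (hG := hG) htu.symm) (adj_snd_path hvm)
      ((mem_support_path_iff_snd_ne htu.symm hvm).mp huv)
    omega
  have hum : u ≠ m := by
    rintro rfl
    have := one_lt_ncard_neighborSet (adj_snd_path (hG := hG) htm) (adj_snd_path hvm)
      ((mem_support_path_iff_snd_ne htm hvm).mp htv)
    omega
  have hdeg := two_lt_ncard_neighborSet (adj_snd_path (hG := hG) htm)
    (adj_snd_path (hG := hG) hum) (adj_snd_path (hG := hG) hvm)
    ((mem_support_path_iff_snd_ne htm hum).mp htu') ((mem_support_path_iff_snd_ne htm hvm).mp htv)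
    ((mem_support_path_iff_snd_ne hum hvm).mp huv)
  exact absurd (hv m htv hdeg) hmv

theorem disjoint_support_path {a b c d r : V}
    (hc : (hG.path a b).support.Disjoint (hG.path c r).support)
    (hd : (hG.path a b).support.Disjoint (hG.path d r).support) :
    (hG.path a b).support.Disjoint (hG.path c d).support := fun _ hab hcd =>
  (mem_support_path_or r hcd).elim (hc hab) fun h => hd hab (mem_support_path_comm.mpr h)

theorem mem_edges_path_of_notMem_edges {a b c x : V} (hx : x ∈ (hG.path a b).support)
    {e : Sym2 V} (he : e ∈ (hG.path x c).edges) (hab : e ∉ (hG.path a b).edges) :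
    e ∈ (hG.path c a).edges ∧ e ∈ (hG.path c b).edges :=
  ⟨(mem_edges_path_iff x).mpr fun h => hab (mem_edges_path_of_mem_support hx (Or.inl (h.mp he))),
    (mem_edges_path_iff x).mpr fun h => hab (mem_edges_path_of_mem_support hx (Or.inr (h.mp he)))⟩

variable (hG) in
def Separates (e : Sym2 V) (a b c d : V) : Prop :=
  e ∉ (hG.path a b).edges ∧ e ∉ (hG.path c d).edges ∧ e ∈ (hG.path a c).edges

section Separates

variable {e : Sym2 V} {a b c d : V}

theorem separates_iff (x : V) :
    hG.Separates e a b c d ↔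
      ((e ∈ (hG.path x a).edges ↔ e ∈ (hG.path x b).edges) ∧
        (e ∈ (hG.path x c).edges ↔ e ∈ (hG.path x d).edges) ∧
        ¬(e ∈ (hG.path x a).edges ↔ e ∈ (hG.path x c).edges)) := by
  simp only [Separates, mem_edges_path_iff x (a := a) (b := b),
    mem_edges_path_iff x (a := c) (b := d), mem_edges_path_iff x (a := a) (b := c)]
  tauto

theorem separates_comm_left : hG.Separates e b a c d ↔ hG.Separates e a b c d := by
  rw [separates_iff a, separates_iff a]
  tauto

theorem separates_comm_right : hG.Separates e a b d c ↔ hG.Separates e a b c d := by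
  rw [separates_iff a, separates_iff a]
  tauto

theorem Separates.disjoint (h : hG.Separates e a b c d) :
    (hG.path a b).support.Disjoint (hG.path c d).support := fun v hab hcd =>
  (mem_edges_path_or v h.2.2).elim
    (fun h' => h.1 (mem_edges_path_of_mem_support hab (Or.inl (mem_edges_path_comm.mpr h'))))
    (fun h' => h.2.1 (mem_edges_path_of_mem_support hcd (Or.inl h')))

theorem Separates.mem_edges_path (h : hG.Separates e a d b c) :
    e ∈ (hG.path a b).edges ∧ e ∈ (hG.path c d).edges := by
  rw [separates_iff a] at h
  rw [mem_edges_path_iff a (a := c) (b := d)]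
  have := notMem_edges_path_self (hG := hG) (a := a) (e := e)
  tauto

theorem separates_iff_mem_edges_path {x y : V} (hx : x ∈ (hG.path a b).support)
    (hy : y ∈ (hG.path c d).support)
    (hxy : ∀ z ∈ (hG.path x y).support,
      (z ∈ (hG.path a b).support → z = x) ∧ (z ∈ (hG.path c d).support → z = y)) :
    hG.Separates e a b c d ↔ e ∈ (hG.path x y).edges := by
  refine ⟨fun ⟨hab, hcd, hac⟩ => ?_, fun he => ?_⟩
  · rcases mem_edges_path_or x hac with h | h
    · exact absurd (mem_edges_path_of_mem_support hx (Or.inl (mem_edges_path_comm.mpr h))) hab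
    · exact (mem_edges_path_or y h).resolve_right fun h' =>
        hcd (mem_edges_path_of_mem_support hy (Or.inl h'))
  · have hab := Walk.notMem_edges_of_forall_mem_support_eq he fun z hz => (hxy z hz).1
    have hcd := Walk.notMem_edges_of_forall_mem_support_eq he fun z hz => (hxy z hz).2
    have hxa : e ∉ (hG.path x a).edges := fun h =>
      hab (mem_edges_path_of_mem_support hx (Or.inl h))
    have hxc : e ∈ (hG.path x c).edges :=
      (mem_edges_path_of_notMem_edges hy (mem_edges_path_comm.mpr he) hcd).1
    exact ⟨hab, hcd, (mem_edges_path_iff x).mpr fun h => hxa (h.mpr hxc)⟩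

theorem separates_iff_eq {p q x : V} (hx : x ∈ (hG.path a b).support)
    (ha : s(c, x) ∈ (hG.path c a).edges) (hb : s(c, x) ∈ (hG.path c b).edges)
    (hp : s(c, x) ∉ (hG.path c p).edges) (hq : s(c, x) ∉ (hG.path c q).edges)
    (hc : c ∈ (hG.path p q).support) :
    hG.Separates e a b p q ↔ e = s(c, x) := by
  rw [separates_iff c]
  refine ⟨fun ⟨hab, hpq, hap⟩ => ?_, ?_⟩
  · have hcp : e ∉ (hG.path c p).edges := fun h =>
      notMem_support_path_of_mem_edges h (hpq.mp h) hc
    rcases mem_edges_path_or x (show e ∈ (hG.path c a).edges by tauto) with h | h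
    · simpa [hG.path_of_adj ((hG.path c a).adj_of_mem_edges ha)] using h
    · exact absurd (mem_edges_path_of_mem_support hx (Or.inl h)) fun h' =>
        (mem_edges_path_iff c).mp h' hab
  · rintro rfl
    exact ⟨iff_of_true ha hb, iff_of_false hp hq, fun h => hp (h.mp ha)⟩

theorem separates_iff_eq_of_branch {p q x y c z t : V} (hx : x ∈ (hG.path a b).support)
    (hy : y ∈ (hG.path p q).support)
    (hxy : ∀ v ∈ (hG.path x y).support,
      (v ∈ (hG.path a b).support → v = x) ∧ (v ∈ (hG.path p q).support → v = y))
    (hc : (hG.path x y).snd = c) (hyc : y ≠ c) (hz : G.Adj c z) (hzx : z ≠ x)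
    (hzy : z ≠ (hG.path c y).snd) (ht : (hG.path c t).snd = z) :
    (hG.Separates e a b p t ↔ e = s(x, c)) ∧ (hG.Separates e a b q t ↔ e = s(x, c)) := by
  have hsep := fun e => separates_iff_mem_edges_path (e := e) hx hy hxy
  have hyx : y ≠ x := by
    rintro rfl
    exact hyc (by simpa [hG.path_self] using hc)
  have hxc : s(x, c) ∈ (hG.path x y).edges := hc ▸ mk_snd_mem_edges_path hyx
  have hcx : G.Adj c x := ((hG.path x y).adj_of_mem_edges hxc).symm
  have hcs : c ∈ (hG.path x y).support := (hG.path x y).snd_mem_support_of_mem_edges hxc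
  have hdir : x ≠ (hG.path c y).snd := by
    simpa [snd_path_of_adj hcx] using (mem_support_path_iff_snd_ne hcx.ne.symm hyc).mp hcs
  have hca := mem_edges_path_of_notMem_edges (c := c) hx (e := s(c, x))
    (by simp [hG.path_of_adj hcx.symm, Sym2.eq_swap]) (Sym2.eq_swap ▸ ((hsep _).mpr hxc).1)
  have hcy : s(c, (hG.path c y).snd) ∈ (hG.path x y).edges :=
    mem_edges_path_of_mem_support hcs (Or.inr (mk_snd_mem_edges_path hyc))
  have hcp := mem_edges_path_of_notMem_edges hy
    (mem_edges_path_comm.mpr (mk_snd_mem_edges_path hyc)) ((hsep _).mpr hcy).2.1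
  have htc : t ≠ c := by
    rintro rfl
    exact hz.ne (by simpa [hG.path_self] using ht)
  -- From `c`, the leaves `a`, `b` are reached through `x`, `p`, `q` through the next vertex
  -- towards `y`, and `t` through `z`.
  have key : ∀ v, s(c, (hG.path c y).snd) ∈ (hG.path c v).edges →
      (hG.Separates e a b v t ↔ e = s(x, c)) := fun v hv => by
    have hsnd := (eq_snd_of_mem_edges_path hv).symm
    rw [Sym2.eq_swap]
    refine separates_iff_eq hx hca.1 hca.2
      (fun h => hdir ((eq_snd_of_mem_edges_path h).trans hsnd))
      (fun h => hzx (ht ▸ eq_snd_of_mem_edges_path h).symm)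
      ((mem_support_path_iff_snd_ne (ne_of_mem_edges_path hv).symm htc).mpr ?_)
    rw [hsnd, ht]
    exact hzy.symm
  exact ⟨key p hcp.1, key q hcp.2⟩

end Separates

section Weights

variable (hG) (w : Sym2 V → ℝ) [Fintype G.edgeSet]

open scoped Classical in
noncomputable def pathWeight (a b : V) : ℝ :=
  ∑ e ∈ G.edgeFinset, if e ∈ (hG.path a b).edges then w e else 0

open scoped Classical in
noncomputable def splitWeight (a b c d : V) : ℝ :=
  ∑ e ∈ G.edgeFinset, if hG.Separates e a b c d then w e else 0

noncomputable def fourPointDiff (a b c d : V) : ℝ :=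
  hG.pathWeight w a b + hG.pathWeight w c d - (hG.pathWeight w a d + hG.pathWeight w b c)

variable {hG w} {a b c d : V}

theorem pathWeight_comm : hG.pathWeight w b a = hG.pathWeight w a b := by
  classical
  exact Finset.sum_congr rfl fun _ _ => if_congr mem_edges_path_comm rfl rfl

theorem fourPointDiff_comm : hG.fourPointDiff w b a d c = hG.fourPointDiff w a b c d := by
  rw [fourPointDiff, fourPointDiff, pathWeight_comm (a := a), pathWeight_comm (a := c)]
  ring

theorem splitWeight_comm_left : hG.splitWeight w b a c d = hG.splitWeight w a b c d := by
  classical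
  exact Finset.sum_congr rfl fun _ _ => if_congr separates_comm_left rfl rfl

theorem splitWeight_comm_right : hG.splitWeight w a b d c = hG.splitWeight w a b c d := by
  classical
  exact Finset.sum_congr rfl fun _ _ => if_congr separates_comm_right rfl rfl

theorem exists_separates_of_splitWeight_ne_zero (h : hG.splitWeight w a b c d ≠ 0) :
    ∃ e, hG.Separates e a b c d := by
  obtain ⟨e, -, he⟩ := Finset.exists_ne_zero_of_sum_ne_zero h
  exact ⟨e, by_contra fun h' => he (if_neg h')⟩

theorem splitWeight_eq_of_separates_iff {f : Sym2 V} (hf : f ∈ G.edgeSet)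
    (h : ∀ e, hG.Separates e a b c d ↔ e = f) : hG.splitWeight w a b c d = w f := by
  rw [splitWeight, Finset.sum_eq_single_of_mem f (mem_edgeFinset.mpr hf)
    fun e _ he => if_neg (mt (h e).mp he), if_pos ((h f).mpr rfl)]

theorem disjoint_of_splitWeight_ne_zero (h : hG.splitWeight w a b c d ≠ 0) :
    (hG.path a b).support.Disjoint (hG.path c d).support :=
  (exists_separates_of_splitWeight_ne_zero h).choose_spec.disjoint

/-- Count each edge according to the split of `{a, b, c, d}` into two pairs that it induces. -/
theorem fourPointDiff_eq (a b c d : V) :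
    hG.fourPointDiff w a b c d = 2 * hG.splitWeight w a d b c - 2 * hG.splitWeight w a b c d := by
  classical
  simp only [fourPointDiff, pathWeight, splitWeight, Finset.mul_sum, ← Finset.sum_add_distrib,
    ← Finset.sum_sub_distrib]
  refine Finset.sum_congr rfl fun e _ => ?_
  simp only [separates_iff a, mem_edges_path_iff a (a := c) (b := d),
    mem_edges_path_iff a (a := b) (b := c)]
  by_cases hb : e ∈ (hG.path a b).edges <;> by_cases hc : e ∈ (hG.path a c).edges <;>
    by_cases hd : e ∈ (hG.path a d).edges <;> simp [hb, hc, hd, notMem_edges_path_self] <;> ring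

theorem fourPointDiff_of_disjoint (h : (hG.path a b).support.Disjoint (hG.path c d).support) :
    hG.fourPointDiff w a b c d = -2 * hG.splitWeight w a b c d := by
  have : hG.splitWeight w a d b c = 0 := by
    by_contra h'
    obtain ⟨e, he⟩ := exists_separates_of_splitWeight_ne_zero h'
    exact Walk.not_disjoint_support_of_mem_edges he.mem_edges_path.1 he.mem_edges_path.2 h
  rw [fourPointDiff_eq, this]
  ring

theorem fourPointDiff_ne_zero_of_splitWeight_ne_zero (h : hG.splitWeight w a b c d ≠ 0) :
    hG.fourPointDiff w a b c d ≠ 0 := by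
  rw [fourPointDiff_of_disjoint (disjoint_of_splitWeight_ne_zero h)]
  simpa using h

/-- The four-point condition. -/
theorem disjoint_of_fourPointDiff_ne_zero (h₁ : hG.fourPointDiff w a b c d ≠ 0)
    (h₂ : hG.fourPointDiff w a b d c ≠ 0) :
    (hG.path a b).support.Disjoint (hG.path c d).support := by
  by_contra hmeet
  have hs : hG.splitWeight w a b c d = 0 := not_not.mp (mt disjoint_of_splitWeight_ne_zero hmeet)
  rw [fourPointDiff_eq, hs] at h₁
  rw [fourPointDiff_eq, splitWeight_comm_right (a := a) (b := b), hs] at h₂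
  obtain ⟨e, he⟩ := exists_separates_of_splitWeight_ne_zero (w := w) (a := a) (b := d) (c := b)
    (d := c) fun h => h₁ (by rw [h]; ring)
  obtain ⟨f, hf⟩ := exists_separates_of_splitWeight_ne_zero (w := w) (a := a) (b := c) (c := b)
    (d := d) fun h => h₂ (by rw [h]; ring)
  have hf' := (separates_comm_right.mpr hf).mem_edges_path
  exact Walk.not_disjoint_support_of_mem_edges hf'.1 hf'.2 he.disjoint

end Weights

end IsTree
end SimpleGraph

namespace WTree

open IsTree

variable {n : ℕ} (P : WTree n)

theorem mem_pathEdges {u v : P.V} {e : Sym2 P.V} :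
    e ∈ P.pathEdges u v ↔ e ∈ (P.isTree.path u v).edges :=
  ⟨fun ⟨_, hp, he⟩ => P.isTree.path_eq hp ▸ he,
    fun he => ⟨_, P.isTree.isPath_path u v, he⟩⟩

theorem buneman_iff {i j l m : Fin n} :
    P.Buneman i j l m ↔ (P.isTree.path (P.leaf i) (P.leaf j)).support.Disjoint
      (P.isTree.path (P.leaf l) (P.leaf m)).support := by
  refine ⟨fun h v hv hv' => h _ _ (P.isTree.isPath_path _ _) (P.isTree.isPath_path _ _) v hv hv',
    fun h p q hp hq v hv hv' => ?_⟩
  rw [← P.isTree.path_eq hp] at hv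
  rw [← P.isTree.path_eq hq] at hv'
  exact h hv hv'

theorem ncard_neighborSet_leaf (i : Fin n) : (P.G.neighborSet (P.leaf i)).ncard = 1 :=
  (P.leafSpec _).mpr ⟨i, rfl⟩

/-- A twig edge lies on the path from its leaf to every other leaf. -/
theorem not_isTwigEdge_of_separates {i j l m : Fin n} (hij : i ≠ j) (hlm : l ≠ m)
    {e : Sym2 P.V} (he : P.isTree.Separates e (P.leaf i) (P.leaf j) (P.leaf l) (P.leaf m)) :
    ¬ P.IsTwigEdge e := by
  have := P.fintypeV
  rintro ⟨t, v, -, p, hp, hnode, hep⟩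
  obtain rfl := P.isTree.path_eq hp
  have key : ∀ u, u ≠ t → e ∈ (P.isTree.path (P.leaf t) (P.leaf u)).edges := fun u hu =>
    mem_edges_path_of_mem_support (P.isTree.mem_support_path_of_ncard_le_two
      (P.ncard_neighborSet_leaf t) (P.ncard_neighborSet_leaf u) (P.leafInj.ne hu.symm) hnode)
      (Or.inl (mem_edges_path_comm.mpr hep))
  obtain rfl | hti := eq_or_ne t i
  · exact he.1 (key j hij.symm)
  obtain rfl | htj := eq_or_ne t j
  · exact he.1 (mem_edges_path_comm.mp (key i hti.symm))
  obtain rfl | htl := eq_or_ne t l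
  · exact he.2.1 (key m hlm.symm)
  obtain rfl | htm := eq_or_ne t m
  · exact he.2.1 (mem_edges_path_comm.mp (key l htl.symm))
  exact (mem_edges_path_iff (P.leaf t)).mp he.2.2 (iff_of_true (key i hti.symm) (key l htl.symm))

theorem mem_subtreeEdges_triple {a b c : Fin n} {e : Sym2 P.V} :
    e ∈ P.subtreeEdges ↑({a, b, c} : Finset (Fin n)) ↔
      e ∈ (P.isTree.path (P.leaf a) (P.leaf b)).edges ∨
        e ∈ (P.isTree.path (P.leaf a) (P.leaf c)).edges ∨
        e ∈ (P.isTree.path (P.leaf b) (P.leaf c)).edges := by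
  simp only [subtreeEdges, Set.mem_ofPred_eq, mem_pathEdges, Finset.coe_insert,
    Finset.coe_singleton, Set.mem_insert_iff, Set.mem_singleton_iff, exists_eq_or_imp,
    exists_eq_left, notMem_edges_path_self, mem_edges_path_comm (a := P.leaf a) (b := P.leaf b),
    mem_edges_path_comm (a := P.leaf a) (b := P.leaf c),
    mem_edges_path_comm (a := P.leaf b) (b := P.leaf c)]
  tauto

section Weights

variable [Fintype P.G.edgeSet]

theorem notMem_of_splitWeight_ne_zero {i j l m r : Fin n}
    (hs : P.isTree.splitWeight P.w (P.leaf i) (P.leaf j) (P.leaf l) (P.leaf m) = 0)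
    (hm : P.isTree.splitWeight P.w (P.leaf i) (P.leaf j) (P.leaf m) (P.leaf r) ≠ 0)
    (hl : P.isTree.splitWeight P.w (P.leaf i) (P.leaf j) (P.leaf l) (P.leaf r) ≠ 0) :
    r ∉ ({i, j, l, m} : Finset (Fin n)) := by
  simp only [Finset.mem_insert, Finset.mem_singleton, not_or]
  refine ⟨?_, ?_, ?_, ?_⟩ <;> rintro rfl
  · exact disjoint_of_splitWeight_ne_zero hm (Walk.start_mem_support _) (Walk.end_mem_support _)
  · exact disjoint_of_splitWeight_ne_zero hm (Walk.end_mem_support _) (Walk.end_mem_support _)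
  · exact hm (splitWeight_comm_right.trans hs)
  · exact hl hs

/-- The leaf `r` hangs off the bridge between the paths `i j` and `l m` right after its first
edge. -/
theorem exists_splitWeight_ne_zero (hess : P.Essential) (hinz : P.InternalNonzero)
    {i j l m : Fin n} (hij : i ≠ j) (hlm : l ≠ m)
    (hdisj : (P.isTree.path (P.leaf i) (P.leaf j)).support.Disjoint
      (P.isTree.path (P.leaf l) (P.leaf m)).support)
    (hs : P.isTree.splitWeight P.w (P.leaf i) (P.leaf j) (P.leaf l) (P.leaf m) = 0) :
    ∃ r ∉ ({i, j, l, m} : Finset (Fin n)),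
      P.isTree.splitWeight P.w (P.leaf i) (P.leaf j) (P.leaf m) (P.leaf r) ≠ 0 ∧
      P.isTree.splitWeight P.w (P.leaf i) (P.leaf j) (P.leaf l) (P.leaf r) ≠ 0 := by
  classical
  have := P.fintypeV
  obtain ⟨x, hx, y, hy, hxy⟩ := P.isTree.exists_path_meeting_only_at_ends
    (P.isTree.path (P.leaf i) (P.leaf j)).support.toFinset
    (P.isTree.path (P.leaf l) (P.leaf m)).support.toFinset
    ⟨_, List.mem_toFinset.mpr (Walk.start_mem_support _)⟩
    ⟨_, List.mem_toFinset.mpr (Walk.start_mem_support _)⟩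
  simp only [List.mem_toFinset] at hx hy hxy
  have hsep := fun e => separates_iff_mem_edges_path (e := e) hx hy hxy
  have hyx : y ≠ x := fun h => hdisj hx (h ▸ hy)
  obtain ⟨c, hc⟩ : ∃ c, (P.isTree.path x y).snd = c := ⟨_, rfl⟩
  have hxc : s(x, c) ∈ (P.isTree.path x y).edges := hc ▸ mk_snd_mem_edges_path hyx
  have hxc' := (P.isTree.path x y).edges_subset_edgeSet hxc
  have hw : P.w s(x, c) ≠ 0 :=
    hinz _ hxc' (P.not_isTwigEdge_of_separates hij hlm ((hsep _).mpr hxc))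
  have hyc : y ≠ c := by
    rintro rfl
    refine hw ((splitWeight_eq_of_separates_iff hxc' fun e => ?_).symm.trans hs)
    rw [hsep, P.isTree.path_of_adj ((P.isTree.path x y).adj_of_mem_edges hxc)]
    simp
  have hcx : P.G.Adj c x := ((P.isTree.path x y).adj_of_mem_edges hxc).symm
  have hdir : x ≠ (P.isTree.path c y).snd := by
    simpa [snd_path_of_adj hcx] using (mem_support_path_iff_snd_ne hcx.ne.symm hyc).mp
      ((P.isTree.path x y).snd_mem_support_of_mem_edges hxc)
  obtain ⟨z, hcz, hzx, hzy⟩ := exists_adj_ne_ne (x := x) (y := (P.isTree.path c y).snd)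
    (lt_of_le_of_ne (one_lt_ncard_neighborSet hcx (adj_snd_path hyc) hdir) (hess c).symm)
  obtain ⟨t, ht, htz⟩ := P.isTree.exists_ncard_neighborSet_eq_one_snd_path_eq hcz
  obtain ⟨r, rfl⟩ := (P.leafSpec t).mp ht
  have hbr := fun e => separates_iff_eq_of_branch (e := e) hx hy hxy hc hyc hcz hzx hzy htz
  have hm : P.isTree.splitWeight P.w (P.leaf i) (P.leaf j) (P.leaf m) (P.leaf r) ≠ 0 := by
    rwa [splitWeight_eq_of_separates_iff hxc' fun e => (hbr e).2]
  have hl : P.isTree.splitWeight P.w (P.leaf i) (P.leaf j) (P.leaf l) (P.leaf r) ≠ 0 := by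
    rwa [splitWeight_eq_of_separates_iff hxc' fun e => (hbr e).1]
  exact ⟨r, P.notMem_of_splitWeight_ne_zero hs hm hl, hm, hl⟩

/-- Every edge of the subtree spanned by three leaves lies on exactly two of the three paths
between them. -/
theorem two_mul_D (a b c : Fin n) :
    2 * P.D {a, b, c} = P.isTree.pathWeight P.w (P.leaf a) (P.leaf b) +
      P.isTree.pathWeight P.w (P.leaf a) (P.leaf c) +
      P.isTree.pathWeight P.w (P.leaf b) (P.leaf c) := by
  classical
  have hsub : P.subtreeEdges ↑({a, b, c} : Finset (Fin n)) ⊆ ↑P.G.edgeFinset := fun e he => by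
    rw [coe_edgeFinset]
    rcases P.mem_subtreeEdges_triple.mp he with h | h | h <;> exact Walk.edges_subset_edgeSet _ h
  rw [D, finsum_mem_def,
    finsum_eq_sum_of_support_subset _ (Set.support_indicator_subset.trans hsub)]
  simp only [pathWeight, Finset.mul_sum, ← Finset.sum_add_distrib]
  refine Finset.sum_congr rfl fun e _ => ?_
  simp only [Set.indicator_apply, mem_subtreeEdges_triple,
    mem_edges_path_iff (P.leaf a) (a := P.leaf b) (b := P.leaf c)]
  by_cases hb : e ∈ (P.isTree.path (P.leaf a) (P.leaf b)).edges <;>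
    by_cases hc : e ∈ (P.isTree.path (P.leaf a) (P.leaf c)).edges <;>
    simp [hb, hc] <;> ring

theorem D_add_D_ne_iff (a b c d x : Fin n) :
    P.D {a, b, x} + P.D {c, d, x} ≠ P.D {a, d, x} + P.D {c, b, x} ↔
      P.isTree.fourPointDiff P.w (P.leaf a) (P.leaf b) (P.leaf c) (P.leaf d) ≠ 0 := by
  have h₁ := P.two_mul_D a b x
  have h₂ := P.two_mul_D c d x
  have h₃ := P.two_mul_D a d x
  have h₄ := P.two_mul_D c b x
  have := pathWeight_comm (hG := P.isTree) (w := P.w) (a := P.leaf b) (b := P.leaf c)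
  rw [fourPointDiff, Ne, Ne, not_iff_not]
  constructor <;> intro h <;> linarith

end Weights

theorem D_pair_comm (a b x : Fin n) : P.D {a, b, x} = P.D {b, a, x} := by
  rw [Finset.insert_comm]

end WTree

/-- let `n ≥ 5` and `P` be an essential internal-nonzero-weighted tree with
leaf set `[n]`. For distinct leaves `i,j,l,m`, the Buneman index `⟨i,j | l,m⟩` holds iff
(a) there is `r ∈ [n] - {i,j,l,m}` satisfying the inequality
`D_{i,j,l} + D_{m,r,l} ≠ D_{i,r,l} + D_{m,j,l}` together with the ones obtained by
swapping `i` with `j` and/or `l` with `m`, or (b) for every `r ∈ [n] - {i,j,l,m}` both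
`D_{i,j,r} + D_{m,l,r} ≠ D_{i,m,r} + D_{j,l,r}` and
`D_{i,j,r} + D_{m,l,r} ≠ D_{i,l,r} + D_{j,m,r}` hold. -/
theorem statement8 (n : ℕ) (hn : 5 ≤ n)
    (P : WTree n) (hess : P.Essential) (hinz : P.InternalNonzero)
    (i j l m : Fin n) (hcard : ({i, j, l, m} : Finset (Fin n)).card = 4) :
    P.Buneman i j l m ↔
      ((∃ r : Fin n, r ∉ ({i, j, l, m} : Finset (Fin n)) ∧
          P.D {i, j, l} + P.D {m, r, l} ≠ P.D {i, r, l} + P.D {m, j, l} ∧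
          P.D {j, i, l} + P.D {m, r, l} ≠ P.D {j, r, l} + P.D {m, i, l} ∧
          P.D {i, j, m} + P.D {l, r, m} ≠ P.D {i, r, m} + P.D {l, j, m} ∧
          P.D {j, i, m} + P.D {l, r, m} ≠ P.D {j, r, m} + P.D {l, i, m}) ∨
       (∀ r : Fin n, r ∉ ({i, j, l, m} : Finset (Fin n)) →
          P.D {i, j, r} + P.D {m, l, r} ≠ P.D {i, m, r} + P.D {j, l, r} ∧
          P.D {i, j, r} + P.D {m, l, r} ≠ P.D {i, l, r} + P.D {j, m, r})) := by
  classical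
  have := P.fintypeV
  obtain ⟨hij, hlm⟩ := Finset.ne_and_ne_of_card_eq_four hcard
  rw [P.buneman_iff]
  constructor
  · intro hdisj
    by_cases hs : P.isTree.splitWeight P.w (P.leaf i) (P.leaf j) (P.leaf l) (P.leaf m) = 0
    · obtain ⟨r, hr, hm, hl⟩ := P.exists_splitWeight_ne_zero hess hinz hij hlm hdisj hs
      refine Or.inl ⟨r, hr, ?_, ?_, ?_, ?_⟩ <;> rw [P.D_add_D_ne_iff] <;>
        apply IsTree.fourPointDiff_ne_zero_of_splitWeight_ne_zero
      exacts [hm, IsTree.splitWeight_comm_left.trans_ne hm, hl,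
        IsTree.splitWeight_comm_left.trans_ne hl]
    · refine Or.inr fun r _ => ⟨?_, ?_⟩
      · rw [P.D_pair_comm m l, P.D_pair_comm j l, P.D_add_D_ne_iff,
          IsTree.fourPointDiff_of_disjoint hdisj]
        simpa using hs
      · rw [P.D_pair_comm j m, P.D_add_D_ne_iff, IsTree.fourPointDiff_of_disjoint
          fun _ h h' => hdisj h (IsTree.mem_support_path_comm.mp h'), IsTree.splitWeight_comm_right]
        simpa using hs
  · rintro (⟨r, -, h₁, h₂, h₃, h₄⟩ | hb)
    · rw [P.D_add_D_ne_iff] at h₁ h₂ h₃ h₄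
      rw [IsTree.fourPointDiff_comm] at h₂ h₄
      exact IsTree.disjoint_support_path
        (IsTree.disjoint_of_fourPointDiff_ne_zero h₃ h₄)
        (IsTree.disjoint_of_fourPointDiff_ne_zero h₁ h₂)
    · obtain ⟨r, -, hr⟩ := Finset.exists_mem_notMem_of_card_lt_card
        (s := {i, j, l, m}) (t := Finset.univ) (by simp [hcard]; omega)
      obtain ⟨h₁, h₂⟩ := hb r hr
      rw [P.D_pair_comm m l, P.D_pair_comm j l, P.D_add_D_ne_iff] at h₁
      rw [P.D_pair_comm j m, P.D_add_D_ne_iff] at h₂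
      exact IsTree.disjoint_of_fourPointDiff_ne_zero h₁ h₂
end

section
/- Let n, k ∈ ℕ with k < n, and let 𝒯 = (T,w) and 𝒯′ = (T′,w′) be weighted trees with leaf set [n] such that 𝒯′ is obtained from 𝒯 by a k-IO operation on an edge e. Then 𝒯 and 𝒯′ have the same k-dissimilarity vector: D_I(𝒯′) = D_I(𝒯) for every k-subset I of [n]. -/
/-!
Both sides of the contracted edge `e` carry fewer than `k` leaves, so every `k`-set `I` of leaves
meets both sides and the subtree spanned by `I` contains `e`. Since `k < n`, neither end of `e` is
a leaf, so the contraction maps the other edges of that subtree bijectively onto the subtree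
spanned by `I` in `T'`, and exactly `k` of them are pendant edges, each gaining `w(e)/k`.
Hence `D_I` loses `w(e)` and gains `k · w(e)/k`.
-/

namespace SimpleGraph

variable {V : Type*} {G : SimpleGraph V} {a b u v : V}

lemma Walk.reachable_deleteEdges_or (p : G.Walk u v) :
    (G.deleteEdges {s(a, b)}).Reachable u v ∨ (G.deleteEdges {s(a, b)}).Reachable u a ∨
      (G.deleteEdges {s(a, b)}).Reachable u b := by
  induction p with
  | nil => exact .inl .rfl
  | @cons u m v h q ih =>
    by_cases he : s(u, m) = s(a, b)
    · rcases Sym2.eq_iff.mp he with ⟨rfl, -⟩ | ⟨rfl, -⟩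
      exacts [.inr (.inl .rfl), .inr (.inr .rfl)]
    · have hadj : (G.deleteEdges {s(a, b)}).Adj u m := by simpa [h] using he
      exact ih.imp hadj.reachable.trans (Or.imp hadj.reachable.trans hadj.reachable.trans)

lemma Preconnected.reachable_deleteEdges_or (hG : G.Preconnected) (u : V) :
    (G.deleteEdges {s(a, b)}).Reachable u a ∨ (G.deleteEdges {s(a, b)}).Reachable u b := by
  obtain ⟨p⟩ := hG u a
  rcases p.reachable_deleteEdges_or (a := a) (b := b) with h | h | h
  exacts [.inl h, .inl h, .inr h]

lemma IsAcyclic.mem_edges_iff_not_reachable_deleteEdges (hG : G.IsAcyclic) {p : G.Walk u v}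
    (hp : p.IsPath) {e : Sym2 V} : e ∈ p.edges ↔ ¬ (G.deleteEdges {e}).Reachable u v := by
  refine ⟨fun he hr => ?_, p.mem_edges_of_not_reachable_deleteEdges⟩
  classical
  induction e using Sym2.ind with | _ x y =>
  obtain ⟨q, hq⟩ := reachable_deleteEdges_iff_exists_walk.mp hr
  have : p = q.bypass :=
    congrArg Subtype.val ((hG.subsingleton_path u v).elim ⟨p, hp⟩ ⟨_, q.bypass_isPath⟩)
  exact hq (q.edges_bypass_subset_edges (this ▸ he))

lemma eq_of_reachable_deleteEdges_of_neighborSet_eq (ha : G.neighborSet a = {b})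
    (h : (G.deleteEdges {s(a, b)}).Reachable u a) : u = a := by
  by_contra hne
  obtain ⟨p⟩ := h.symm
  have hadj := p.adj_snd (Walk.not_nil_of_ne (Ne.symm hne))
  rw [deleteEdges_adj] at hadj
  have : p.snd ∈ G.neighborSet a := hadj.1
  rw [ha, Set.mem_singleton_iff] at this
  exact hadj.2 (by simp [this])

lemma IsAcyclic.not_adj_of_adj_of_adj (hG : G.IsAcyclic) {x y z : V} (hxy : G.Adj x y)
    (hyz : G.Adj y z) : ¬ G.Adj z x := by
  intro hzx
  apply hG (Walk.cons hzx (Walk.cons hxy (Walk.cons hyz Walk.nil)))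
  rw [Walk.cons_isCycle_iff]
  refine ⟨?_, ?_⟩
  · simp [hxy.ne, hyz.ne, hzx.ne.symm]
  · simp [hxy.ne, hzx.ne, hzx.ne.symm, hyz.ne.symm]

lemma IsAcyclic.edges_eq_of_adj (hG : G.IsAcyclic) (h : G.Adj u v) {p : G.Walk u v}
    (hp : p.IsPath) : p.edges = [s(u, v)] := by
  have : p = Walk.cons h Walk.nil :=
    congrArg Subtype.val ((hG.subsingleton_path u v).elim ⟨p, hp⟩ (Path.singleton h))
  simp [this]

variable {V' : Type*} {G' : SimpleGraph V'} {φ : V → V'}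

lemma map_eq_map_of_sym2_eq (hab : φ a = φ b) {x y : V} (h : s(x, y) = s(a, b)) : φ x = φ y := by
  rcases Sym2.eq_iff.mp h with ⟨rfl, rfl⟩ | ⟨rfl, rfl⟩
  exacts [hab, hab.symm]

lemma IsAcyclic.injOn_sym2Map (hG : G.IsAcyclic) (hadj : G.Adj a b)
    (hfib : ∀ x y : V, φ x = φ y → x = y ∨ s(x, y) = s(a, b)) :
    Set.InjOn (Sym2.map φ) (G.edgeSet \ {s(a, b)}) := by
  have adj_of_eq {x y : V} (h : s(x, y) = s(a, b)) : G.Adj x y := by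
    rw [← G.mem_edgeSet, h]; exact hadj
  have key {x y x' y' : V} (hxy : G.Adj x y) (hxy' : G.Adj x' y') (hne : s(x, y) ≠ s(a, b))
      (hx : φ x = φ x') (hy : φ y = φ y') : s(x, y) = s(x', y') := by
    rcases hfib _ _ hx with rfl | hxx' <;> rcases hfib _ _ hy with rfl | hyy'
    · rfl
    · exact (hG.not_adj_of_adj_of_adj hxy.symm hxy' (adj_of_eq hyy').symm).elim
    · exact (hG.not_adj_of_adj_of_adj hxy' hxy.symm (adj_of_eq hxx')).elim
    · rcases Sym2.eq_iff.mp (hxx'.trans hyy'.symm) with ⟨rfl, -⟩ | ⟨rfl, rfl⟩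
      exacts [(hxy.ne rfl).elim, (hne hxx').elim]
  rintro ⟨x, y⟩ ⟨hxy, hne⟩ ⟨x', y'⟩ ⟨hxy', -⟩ heq
  rcases Sym2.eq_iff.mp heq with ⟨hx, hy⟩ | ⟨hx, hy⟩
  · exact key hxy hxy' hne hx hy
  · exact (key hxy hxy'.symm hne hx hy).trans Sym2.eq_swap

variable [DecidableEq V]

namespace Walk

variable (hφ : ∀ ⦃x y⦄, G.Adj x y → s(x, y) ≠ s(a, b) → G'.Adj (φ x) (φ y)) (hab : φ a = φ b)

def contract : ∀ {u v : V}, G.Walk u v → G'.Walk (φ u) (φ v)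
  | _, _, nil => nil
  | u, _, cons (v := x) h q =>
    if he : s(u, x) = s(a, b) then (contract q).copy (map_eq_map_of_sym2_eq hab he).symm rfl
    else cons (hφ h he) (contract q)

lemma edges_contract (p : G.Walk u v) :
    (p.contract hφ hab).edges = (p.edges.filter (· ≠ s(a, b))).map (Sym2.map φ) := by
  induction p with
  | nil => rfl
  | @cons u x v h q ih =>
    by_cases he : s(u, x) = s(a, b) <;> simp [contract, he, ih]

lemma support_contract_subset (p : G.Walk u v) :
    (p.contract hφ hab).support ⊆ p.support.map φ := by
  induction p with
  | nil => simp [contract]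
  | @cons u x v h q ih =>
    by_cases he : s(u, x) = s(a, b)
    · simp only [contract, he, dite_true, support_copy, support_cons, List.map_cons]
      exact fun z hz => List.mem_cons_of_mem _ (ih hz)
    · simp only [contract, he, dite_false, support_cons, List.map_cons]
      exact List.cons_subset_cons _ ih

lemma IsPath.contract (hG : G.IsAcyclic) (hadj : G.Adj a b)
    (hfib : ∀ x y : V, φ x = φ y → x = y ∨ s(x, y) = s(a, b))
    {p : G.Walk u v} (hp : p.IsPath) : (p.contract hφ hab).IsPath := by
  induction p with
  | nil => simp [Walk.contract]
  | @cons u x v h q ih =>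
    rw [cons_isPath_iff] at hp
    by_cases he : s(u, x) = s(a, b)
    · simpa [Walk.contract, he] using ih hp.1
    simp only [Walk.contract, he, dite_false, cons_isPath_iff]
    refine ⟨ih hp.1, fun hmem => ?_⟩
    obtain ⟨w, hw, hφw⟩ := List.mem_map.mp (support_contract_subset hφ hab q hmem)
    rcases hfib u w hφw.symm with rfl | huw
    · exact hp.2 hw
    -- `u` and `w` are the ends of `s(a, b)`, so the path `u x ⋯ w` must be that edge
    have huw' : G.Adj u w := by
      rcases Sym2.eq_iff.mp huw with ⟨rfl, rfl⟩ | ⟨rfl, rfl⟩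
      exacts [hadj, hadj.symm]
    have hpath : (cons h (q.takeUntil w hw)).IsPath :=
      (cons_isPath_iff _ _).mpr
        ⟨hp.1.takeUntil hw, fun h' => hp.2 (q.support_takeUntil_subset_support hw h')⟩
    have := hG.edges_eq_of_adj huw' hpath
    simp only [edges_cons, List.cons.injEq] at this
    exact he (this.1.trans huw)

end Walk

end SimpleGraph

namespace WTree

open SimpleGraph

variable {n : ℕ} (T : WTree n)

instance : Fintype T.V := T.fintypeV

lemma preconnected : T.G.Preconnected := T.isTree.connected.preconnected

lemma mem_pathEdges_iff_mem_edges {u v : T.V} {p : T.G.Walk u v} (hp : p.IsPath)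
    {e : Sym2 T.V} : e ∈ T.pathEdges u v ↔ e ∈ p.edges := by
  refine ⟨fun ⟨q, hq, he⟩ => ?_, fun he => ⟨p, hp, he⟩⟩
  have : q = p :=
    congrArg Subtype.val ((T.isTree.isAcyclic.subsingleton_path u v).elim ⟨q, hq⟩ ⟨p, hp⟩)
  exact this ▸ he

lemma mem_pathEdges_iff {e : Sym2 T.V} {u v : T.V} :
    e ∈ T.pathEdges u v ↔ ¬ (T.G.deleteEdges {e}).Reachable u v := by
  classical
  obtain ⟨p⟩ := T.preconnected u v
  rw [T.mem_pathEdges_iff_mem_edges p.bypass_isPath,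
    T.isTree.isAcyclic.mem_edges_iff_not_reachable_deleteEdges p.bypass_isPath]

lemma mem_sideLeaves_iff {e : Sym2 T.V} {x : T.V} {i : Fin n} :
    i ∈ T.sideLeaves e x ↔ (T.G.deleteEdges {e}).Reachable (T.leaf i) x := by
  simp [sideLeaves, mem_pathEdges_iff]

noncomputable def leafNbr (i : Fin n) : T.V :=
  (Set.ncard_eq_one.mp ((T.leafSpec _).mpr ⟨i, rfl⟩)).choose

lemma neighborSet_leaf (i : Fin n) : T.G.neighborSet (T.leaf i) = {T.leafNbr i} :=
  (Set.ncard_eq_one.mp ((T.leafSpec _).mpr ⟨i, rfl⟩)).choose_spec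

lemma subsingleton_neighborSet_leaf (i : Fin n) : (T.G.neighborSet (T.leaf i)).Subsingleton := by
  rw [neighborSet_leaf]
  exact Set.subsingleton_singleton

lemma adj_leaf_iff {i : Fin n} {x : T.V} : T.G.Adj (T.leaf i) x ↔ x = T.leafNbr i := by
  rw [← mem_neighborSet, neighborSet_leaf, Set.mem_singleton_iff]

noncomputable def pendantEdge (i : Fin n) : Sym2 T.V := s(T.leaf i, T.leafNbr i)

lemma leaf_ne_of_ncard_sideLeaves_lt {k : ℕ} (hk : k < n) {a b : T.V} (hadj : T.G.Adj a b)
    (hb : (T.sideLeaves s(a, b) b).ncard < k) (i : Fin n) : T.leaf i ≠ a := by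
  rintro rfl
  have hnbr : T.G.neighborSet (T.leaf i) = {b} := by
    rw [neighborSet_leaf, T.adj_leaf_iff.mp hadj]
  have hsub : {i}ᶜ ⊆ T.sideLeaves s(T.leaf i, b) b := fun j hj => by
    rw [mem_sideLeaves_iff]
    refine (T.preconnected.reachable_deleteEdges_or (T.leaf j)).resolve_left fun h => hj ?_
    exact T.leafInj (eq_of_reachable_deleteEdges_of_neighborSet_eq hnbr h)
  have := Set.ncard_le_ncard hsub
  have := Set.ncard_add_ncard_compl {i}
  simp only [Set.ncard_singleton, Nat.card_eq_fintype_card, Fintype.card_fin] at this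
  omega

lemma mem_subtreeEdges_of_ncard_sideLeaves_lt {a b : T.V} (hadj : T.G.Adj a b)
    {I : Finset (Fin n)} (ha : (T.sideLeaves s(a, b) a).ncard < I.card)
    (hb : (T.sideLeaves s(a, b) b).ncard < I.card) : s(a, b) ∈ T.subtreeEdges I := by
  rw [← Set.ncard_coe_finset] at ha hb
  obtain ⟨i, hi, hia⟩ := Set.exists_mem_notMem_of_ncard_lt_ncard ha
  obtain ⟨j, hj, hjb⟩ := Set.exists_mem_notMem_of_ncard_lt_ncard hb
  rw [mem_sideLeaves_iff] at hia hjb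
  have hib := (T.preconnected.reachable_deleteEdges_or (T.leaf i)).resolve_left hia
  have hja := (T.preconnected.reachable_deleteEdges_or (T.leaf j)).resolve_right hjb
  have hbridge := isBridge_iff.mp (isAcyclic_iff_forall_adj_isBridge.mp T.isTree.isAcyclic hadj)
  exact ⟨i, hi, j, hj,
    T.mem_pathEdges_iff.mpr fun hij => hbridge (hja.symm.trans (hij.symm.trans hib))⟩

lemma nontrivial_of_mem_subtreeEdges {S : Set (Fin n)} {e : Sym2 T.V}
    (he : e ∈ T.subtreeEdges S) : S.Nontrivial := by
  obtain ⟨i, hi, j, hj, p, hp, hep⟩ := he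
  refine ⟨i, hi, j, hj, fun hij => ?_⟩
  subst hij
  simp [Walk.eq_nil_iff_nil.mpr (Walk.isPath_iff_nil.mp hp)] at hep

lemma pendantEdge_mem_subtreeEdges {S : Set (Fin n)} (hS : S.Nontrivial) {i : Fin n}
    (hi : i ∈ S) : T.pendantEdge i ∈ T.subtreeEdges S := by
  classical
  obtain ⟨j, hj, hij⟩ := hS.exists_ne i
  replace hij := Ne.symm hij
  obtain ⟨p⟩ := T.preconnected (T.leaf i) (T.leaf j)
  obtain ⟨x, hx, q, hq⟩ := Walk.exists_eq_cons_of_ne (T.leafInj.ne hij) p.bypass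
  refine ⟨i, hi, j, hj, p.bypass, p.bypass_isPath, ?_⟩
  rw [hq, Walk.edges_cons, pendantEdge, ← T.adj_leaf_iff.mp hx]
  exact List.mem_cons_self

lemma eq_pendantEdge_of_mem_subtreeEdges {S : Set (Fin n)} {e : Sym2 T.V}
    (he : e ∈ T.subtreeEdges S) {j : Fin n} (hj : T.leaf j ∈ e) : j ∈ S ∧ e = T.pendantEdge j := by
  obtain ⟨i₁, hi₁, i₂, hi₂, p, hp, hep⟩ := he
  obtain ⟨z, rfl⟩ := Sym2.mem_iff_exists.mp hj
  refine ⟨?_, by rw [pendantEdge, ← T.adj_leaf_iff.mp (p.adj_of_mem_edges hep)]⟩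
  by_contra hjS
  refine hp.isTrail.not_mem_support_of_subsingleton_neighborSet (fun h => hjS ?_) (fun h => hjS ?_)
    (T.subsingleton_neighborSet_leaf j) (p.fst_mem_support_of_mem_edges hep)
  exacts [T.leafInj h ▸ hi₁, T.leafInj h ▸ hi₂]

lemma pendantEdge_injective {v : T.V} (hv : ∀ i, T.leaf i ≠ v) :
    Function.Injective T.pendantEdge := by
  classical
  intro i j hij
  by_contra hne
  rcases Sym2.eq_iff.mp hij with ⟨h, -⟩ | ⟨-, hj⟩
  · exact hne (T.leafInj h)
  -- the two leaves are adjacent, so a path from `leaf i` to `v` runs through the leaf `leaf j`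
  obtain ⟨p⟩ := T.preconnected (T.leaf i) v
  obtain ⟨x, hx, q, hq⟩ := Walk.exists_eq_cons_of_ne (hv i) p.bypass
  have hxj : x = T.leaf j := (T.adj_leaf_iff.mp hx).trans hj
  refine p.bypass_isPath.isTrail.not_mem_support_of_subsingleton_neighborSet
    (fun h => hne (T.leafInj h).symm) (hv j)
    (T.subsingleton_neighborSet_leaf j) ?_
  rw [hq, Walk.support_cons, ← hxj]
  exact List.mem_cons_of_mem _ q.start_mem_support

lemma subtreeEdges_subset_edgeSet (S : Set (Fin n)) : T.subtreeEdges S ⊆ T.G.edgeSet :=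
  fun _ ⟨_, _, _, _, p, _, he⟩ => p.edges_subset_edgeSet he

section Contraction

variable {T T' : WTree n} {a b : T.V} {φ : T.V → T'.V} (hadj : T.G.Adj a b)
  (hφ : ∀ ⦃x y⦄, T.G.Adj x y → s(x, y) ≠ s(a, b) → T'.G.Adj (φ x) (φ y)) (hab : φ a = φ b)
  (hfib : ∀ x y : T.V, φ x = φ y → x = y ∨ s(x, y) = s(a, b))
include hadj hφ hab hfib

lemma pathEdges_map (u v : T.V) :
    T'.pathEdges (φ u) (φ v) = Sym2.map φ '' (T.pathEdges u v \ {s(a, b)}) := by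
  classical
  obtain ⟨p⟩ := T.preconnected u v
  have hp := p.bypass_isPath
  ext e
  simp [T'.mem_pathEdges_iff_mem_edges (hp.contract hφ hab T.isTree.isAcyclic hadj hfib),
    T.mem_pathEdges_iff_mem_edges hp, Walk.edges_contract, and_comm]

lemma subtreeEdges_map (hleaf : ∀ i, φ (T.leaf i) = T'.leaf i) (S : Set (Fin n)) :
    T'.subtreeEdges S = Sym2.map φ '' (T.subtreeEdges S \ {s(a, b)}) := by
  ext e
  simp only [subtreeEdges, ← hleaf, pathEdges_map hadj hφ hab hfib, Set.mem_ofPred_eq,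
    Set.mem_image, Set.mem_sdiff]
  grind

lemma D_eq_of_contract (hleaf : ∀ i, φ (T.leaf i) = T'.leaf i) (c : ℝ)
    (hw : ∀ x y : T.V, T.G.Adj x y → s(x, y) ≠ s(a, b) →
      ((∃ i, T.leaf i = x ∨ T.leaf i = y) → T'.w s(φ x, φ y) = T.w s(x, y) + c) ∧
      (¬ (∃ i, T.leaf i = x ∨ T.leaf i = y) → T'.w s(φ x, φ y) = T.w s(x, y)))
    (ha : ∀ i, T.leaf i ≠ a) (hb : ∀ i, T.leaf i ≠ b) {I : Finset (Fin n)}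
    (hI : s(a, b) ∈ T.subtreeEdges I) : T'.D I = T.D I - T.w s(a, b) + I.card * c := by
  set A := T.subtreeEdges I
  set P := T.pendantEdge '' I
  have hPA : P ⊆ A \ {s(a, b)} := by
    rintro _ ⟨j, hj, rfl⟩
    refine ⟨T.pendantEdge_mem_subtreeEdges (T.nontrivial_of_mem_subtreeEdges hI) hj, fun h => ?_⟩
    have : T.leaf j ∈ s(a, b) := h ▸ Sym2.mem_mk_left _ _
    rcases Sym2.mem_iff.mp this with h | h
    exacts [ha j h, hb j h]
  have hw' : ∀ e ∈ A \ {s(a, b)}, T'.w (Sym2.map φ e) = T.w e + P.indicator (fun _ => c) e := by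
    intro e ⟨he, hne⟩
    induction e using Sym2.ind with | _ x y =>
    obtain ⟨hleafEdge, hinner⟩ := hw x y (T.subtreeEdges_subset_edgeSet _ he) hne
    rw [Sym2.map_mk]
    by_cases hl : ∃ i, T.leaf i = x ∨ T.leaf i = y
    · obtain ⟨i, hi⟩ := hl
      obtain ⟨hiI, hei⟩ := T.eq_pendantEdge_of_mem_subtreeEdges he (Sym2.mem_iff.mpr hi)
      rw [hleafEdge ⟨i, hi⟩, Set.indicator_of_mem (show s(x, y) ∈ P from ⟨i, hiI, hei.symm⟩)]
    · rw [hinner hl, Set.indicator_of_notMem, add_zero]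
      rintro ⟨j, -, hj⟩
      exact hl ⟨j, Sym2.mem_iff.mp (by rw [← hj]; exact Sym2.mem_mk_left _ _)⟩
  have hinj : Set.InjOn (Sym2.map φ) (A \ {s(a, b)}) :=
    (T.isTree.isAcyclic.injOn_sym2Map hadj hfib).mono
      (Set.sdiff_subset_sdiff_left (T.subtreeEdges_subset_edgeSet _))
  calc T'.D I = ∑ᶠ e ∈ A \ {s(a, b)}, T'.w (Sym2.map φ e) := by
        rw [D, subtreeEdges_map hadj hφ hab hfib hleaf, finsum_mem_image hinj]
    _ = ∑ᶠ e ∈ A \ {s(a, b)}, T.w e + ∑ᶠ e ∈ P, c := by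
        rw [finsum_mem_congr rfl hw', finsum_mem_add_distrib (Set.toFinite _),
          finsum_mem_def (f := P.indicator _), Set.indicator_indicator,
          Set.inter_eq_right.mpr hPA, ← finsum_mem_def]
    _ = T.D I - T.w s(a, b) + I.card * c := by
        have hD : T.D I = T.w s(a, b) + ∑ᶠ e ∈ A \ {s(a, b)}, T.w e := by
          rw [← finsum_mem_insert _ (fun h => h.2 rfl) (Set.toFinite _),
            Set.insert_sdiff_self_of_mem hI, D]
        rw [finsum_mem_image (T.pendantEdge_injective ha).injOn, finsum_mem_coe_finset,
          Finset.sum_const, nsmul_eq_mul, hD]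
        ring

end Contraction

end WTree

/-- if `k < n` and `T'` is obtained from the weighted tree `T` (with leaf
set `[n]`) by a `k`-IO operation, then `T` and `T'` have the same `k`-dissimilarity
vector. -/
theorem statement14 (n k : ℕ) (hk : k < n) (T T' : WTree n)
    (h : WTree.IOStep k T T') :
    ∀ I : Finset (Fin n), I.card = k → T'.D I = T.D I := by
  rintro I rfl
  obtain ⟨a, b, hadj, ha, hb, φ, -, hab, hfib, hleaf, hadj', hw⟩ := h
  have hφ : ∀ ⦃x y⦄, T.G.Adj x y → s(x, y) ≠ s(a, b) → T'.G.Adj (φ x) (φ y) :=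
    fun x y hxy hne => (hadj' _ _).mpr ⟨x, y, rfl, rfl, hxy, hne⟩
  have ha' := T.leaf_ne_of_ncard_sideLeaves_lt hk hadj hb
  have hb' := T.leaf_ne_of_ncard_sideLeaves_lt hk hadj.symm (by rwa [Sym2.eq_swap])
  have hI := T.mem_subtreeEdges_of_ncard_sideLeaves_lt hadj ha hb
  have hcard : (I.card : ℝ) ≠ 0 := by exact_mod_cast ((Nat.zero_le _).trans_lt ha).ne'
  rw [WTree.D_eq_of_contract hadj hφ hab hfib hleaf _ hw ha' hb' hI, mul_div_cancel₀ _ hcard]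
  ring
end
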